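/- arXiv:1403.5687 — 3 statements merged into one kernel-verified Lean document; each statement's English description precedes it below -/
import Mathlib

section
/- For the loop percolation L_{α,κ} on ℤ^d with d ≥ 3, α > 0 and κ < 0, for any two distinct vertices x and y, μ_κ(ℓ : x, y ∈ ℓ) = ∞, and hence almost surely some loop of L_{α,κ} visits both x and y; in particular all of ℤ^d is covered by the loops through any fixed vertex. -/
open MeasureTheory

noncomputable section

/-- The vertex set of the integer lattice `ℤ^d`. -/
abbrev Vtx (d : ℕ) := Fin d → ℤ

/-- Transition matrix of simple random walk on `ℤ^d`. -/
def Qd (d : ℕ) (x y : Vtx d) : ℝ :=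
  if (∑ i, (x i - y i).natAbs) = 1 then (2 * (d : ℝ))⁻¹ else 0

/-- `n`-step transition probabilities of simple random walk on `ℤ^d`. -/
def stepP (d : ℕ) : ℕ → Vtx d → Vtx d → ℝ
  | 0 => fun x y => if x = y then 1 else 0
  | n + 1 => fun x y => ∑' z, Qd d x z * stepP d n z y

/-- Green function of simple random walk on `ℤ^d`: `G(x,y) = ∑_{n≥0} P^x[X_n = y]`. -/
def green (d : ℕ) (x y : Vtx d) : ℝ := ∑' n, stepP d n x y

/-- A nontrivial discrete based loop: a list `(x_1,…,x_n)`, `n ≥ 2`, with cyclically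
consecutive entries distinct (`x_1 ≠ x_2, …, x_n ≠ x_1`). -/
def IsLoop {d : ℕ} (l : List (Vtx d)) : Prop :=
  2 ≤ l.length ∧ ∀ i < l.length, l.getD i 0 ≠ l.getD ((i + 1) % l.length) 0

/-- Weight of a based loop under the loop measure `μ̇` (with `κ = 0`):
`(1/n) Q^{x_1}_{x_2} ⋯ Q^{x_n}_{x_1}`. -/
def loopWeight (d : ℕ) (l : List (Vtx d)) : ℝ :=
  (l.length : ℝ)⁻¹ *
    ∏ i ∈ Finset.range l.length, Qd d (l.getD i 0) (l.getD ((i + 1) % l.length) 0)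

end

noncomputable section

/-- Weight of a based loop under `μ̇_κ` on `ℤ^d`: extra killing factor `(1/(1+κ))^n`. -/
def loopWeightK (d : ℕ) (κ : ℝ) (l : List (Vtx d)) : ℝ :=
  ((1 + κ)⁻¹) ^ l.length * loopWeight d l

/-- `L` is a Poisson loop ensemble with intensity `α μ̇_κ` on `ℤ^d`. -/
def IsPoissonLoopSoupK (d : ℕ) (κ : ℝ) {Ω : Type*} [MeasurableSpace Ω] (P : Measure Ω)
    (α : ℝ) (L : Ω → List (Vtx d) → ℕ) : Prop :=
  (∀ l, Measurable fun ω => L ω l) ∧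
  ProbabilityTheory.iIndepFun (fun l ω => L ω l) P ∧
  (∀ l, IsLoop l → ∀ n : ℕ,
    P {ω | L ω l = n} = ENNReal.ofReal
      (Real.exp (-(α * loopWeightK d κ l)) * (α * loopWeightK d κ l) ^ n /
        (Nat.factorial n : ℝ))) ∧
  (∀ l, ¬ IsLoop l → ∀ ω, L ω l = 0)

/-!
For `κ < 0` the killing factor `(1 + κ)⁻ⁿ` grows exponentially in the length `n`, and this beats
the polynomial loss in counting loops through `x` and `y`. Fix a nearest-neighbour path `p` from
`x` to `y` of length `a`. For words `s`, `t` of `k` unit steps with the same sum, the walk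
`p, s, -t, -p` is a loop through `x` and `y` of length `n = 2k + 2a` and weight
`(1 + κ)⁻ⁿ / (n (2d)ⁿ)`. The sum of a word lies in a box of `(2k + 1)^d` points, so by
Cauchy–Schwarz there are at least `(2d)^{2k} / (2k + 1)^d` such pairs, and these loops alone carry
`μ_κ`-mass of order `(1 + κ)^{-2k} / poly(k) → ∞`.

The probability that the soup contains no loop through `x` and `y` is at most
`∏_{ℓ ∈ F} exp (-α μ_κ(ℓ))` for every finite set `F` of such loops, hence zero; covering all of
`ℤ^d` follows because there are countably many `z`.
-/

namespace LoopSoup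

open Filter Topology ProbabilityTheory Finset
open scoped ENNReal

variable {d : ℕ}

def IsUnitStep (v : Vtx d) : Prop := ∑ i, (v i).natAbs = 1

lemma IsUnitStep.ne_zero {v : Vtx d} (hv : IsUnitStep v) : v ≠ 0 := by
  rintro rfl
  simp [IsUnitStep] at hv

lemma IsUnitStep.neg {v : Vtx d} (hv : IsUnitStep v) : IsUnitStep (-v) := by
  simpa [IsUnitStep] using hv

lemma Qd_add_of_isUnitStep {v : Vtx d} (hv : IsUnitStep v) (u : Vtx d) :
    Qd d u (u + v) = (2 * (d : ℝ))⁻¹ := by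
  rw [Qd, if_pos (by simpa [IsUnitStep] using hv)]

def unitVec (e : Fin d × ℤˣ) : Vtx d := Pi.single e.1 (e.2 : ℤ)

lemma isUnitStep_unitVec (e : Fin d × ℤˣ) : IsUnitStep (unitVec e) := by
  rw [IsUnitStep, Finset.sum_eq_single e.1 (fun j _ hj => by simp [unitVec, hj]) (by simp)]
  simp [unitVec]

lemma unitVec_injective : Function.Injective (unitVec (d := d)) := by
  rintro ⟨i, u⟩ ⟨j, v⟩ h
  have hi := congrFun h i
  by_cases hij : i = j
  · subst hij
    simp_all [unitVec, Units.ext_iff]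
  · simp [unitVec, hij] at hi

lemma exists_unitStep_path (z : Vtx d) :
    ∃ p : List (Vtx d), (∀ v ∈ p, IsUnitStep v) ∧ p.sum = z := by
  refine ⟨(List.finRange d).flatMap fun i => List.replicate (z i).natAbs (Pi.single i (z i).sign),
    ?_, ?_⟩
  · simp only [List.mem_flatMap, List.mem_replicate]
    rintro v ⟨i, -, hz, rfl⟩
    rw [IsUnitStep, Finset.sum_eq_single i (fun j _ hj => by simp [hj]) (by simp)]
    simp [Int.natAbs_sign_of_ne_zero (Int.natAbs_ne_zero.mp hz)]
  · rw [List.flatMap_def, List.sum_flatten, List.map_map, ← Fin.sum_univ_def]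
    simp only [Function.comp_def, List.sum_replicate]
    conv_rhs => rw [← Finset.univ_sum_single z]
    refine Finset.sum_congr rfl fun i _ => ?_
    rw [← Pi.single_smul, nsmul_eq_mul, mul_comm, Int.sign_mul_natAbs]

def walkLoop (x : Vtx d) (w : List (Vtx d)) : List (Vtx d) :=
  List.ofFn fun i : Fin w.length => x + (w.take i).sum

@[simp] lemma length_walkLoop (x : Vtx d) (w : List (Vtx d)) :
    (walkLoop x w).length = w.length := by
  simp [walkLoop]

lemma add_sum_take_mem_walkLoop (x : Vtx d) {w : List (Vtx d)} {i : ℕ} (hi : i < w.length) :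
    x + (w.take i).sum ∈ walkLoop x w :=
  List.mem_ofFn.mpr ⟨⟨i, hi⟩, rfl⟩

lemma getD_walkLoop (x : Vtx d) {w : List (Vtx d)} {i : ℕ} (hi : i < w.length) :
    (walkLoop x w).getD i 0 = x + (w.take i).sum := by
  simp [walkLoop, hi]

lemma getD_succ_mod_walkLoop (x : Vtx d) {w : List (Vtx d)} (hw : w.sum = 0) {i : ℕ}
    (hi : i < w.length) :
    (walkLoop x w).getD ((i + 1) % w.length) 0 = (walkLoop x w).getD i 0 + w[i] := by
  rw [getD_walkLoop x hi, add_assoc, ← List.sum_take_succ]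
  rcases Nat.lt_or_ge (i + 1) w.length with h | h
  · rw [Nat.mod_eq_of_lt h, getD_walkLoop x h]
  · rw [show i + 1 = w.length by omega, Nat.mod_self, getD_walkLoop x (by omega),
      List.take_length, hw]
    simp

lemma isLoop_walkLoop (x : Vtx d) {w : List (Vtx d)} (hu : ∀ v ∈ w, IsUnitStep v)
    (hw : w.sum = 0) (hlen : 2 ≤ w.length) : IsLoop (walkLoop x w) := by
  refine ⟨by simpa using hlen, fun i hi => ?_⟩
  rw [length_walkLoop] at hi ⊢
  rw [getD_succ_mod_walkLoop x hw hi, ne_eq, left_eq_add]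
  exact (hu _ (List.getElem_mem hi)).ne_zero

lemma loopWeight_walkLoop (x : Vtx d) {w : List (Vtx d)} (hu : ∀ v ∈ w, IsUnitStep v)
    (hw : w.sum = 0) :
    loopWeight d (walkLoop x w) = (w.length : ℝ)⁻¹ * (2 * (d : ℝ))⁻¹ ^ w.length := by
  rw [loopWeight, length_walkLoop, Finset.prod_congr rfl fun i hi => ?_, Finset.prod_const,
    Finset.card_range]
  rw [Finset.mem_range] at hi
  rw [getD_succ_mod_walkLoop x hw hi]
  exact Qd_add_of_isUnitStep (hu _ (List.getElem_mem hi)) _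

lemma eq_of_walkLoop_eq (x : Vtx d) {w w' : List (Vtx d)} (hw : w.sum = 0)
    (hw' : w'.sum = 0) (h : walkLoop x w = walkLoop x w') : w = w' := by
  have hlen : w.length = w'.length := by simpa using congrArg List.length h
  refine List.ext_getElem hlen fun i hi hi' => ?_
  have step := getD_succ_mod_walkLoop x hw hi
  rw [h, hlen, getD_succ_mod_walkLoop x hw' hi'] at step
  exact (add_left_cancel step).symm

def walkWeight (d : ℕ) (κ : ℝ) (n : ℕ) : ℝ := (1 + κ)⁻¹ ^ n * ((n : ℝ)⁻¹ * (2 * (d : ℝ))⁻¹ ^ n)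

lemma loopWeightK_walkLoop (κ : ℝ) (x : Vtx d) {w : List (Vtx d)} (hu : ∀ v ∈ w, IsUnitStep v)
    (hw : w.sum = 0) : loopWeightK d κ (walkLoop x w) = walkWeight d κ w.length := by
  rw [loopWeightK, loopWeight_walkLoop x hu hw, length_walkLoop, walkWeight]

lemma loopWeightK_nonneg {κ : ℝ} (hκ1 : -1 < κ) (l : List (Vtx d)) : 0 ≤ loopWeightK d κ l := by
  have hQ (u v : Vtx d) : 0 ≤ Qd d u v := by
    unfold Qd
    split_ifs <;> positivity
  unfold loopWeightK loopWeight
  have : 0 < 1 + κ := by linarith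
  exact mul_nonneg (by positivity)
    (mul_nonneg (by positivity) (Finset.prod_nonneg fun _ _ => hQ _ _))

lemma card_sq_le_card_mul_card_fiberPairs {α β : Type*} [Fintype α] [DecidableEq β]
    (f : α → β) (B : Finset β) (hf : ∀ a, f a ∈ B) :
    Fintype.card α ^ 2 ≤ #B * Fintype.card {p : α × α // f p.1 = f p.2} := by
  have hα : Fintype.card α = ∑ b ∈ B, #{a | f a = b} :=
    card_eq_sum_card_fiberwise fun a _ => hf a
  have hpairs : Fintype.card {p : α × α // f p.1 = f p.2} = ∑ b ∈ B, #{a | f a = b} ^ 2 := by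
    rw [Fintype.card_subtype, card_eq_sum_card_fiberwise (f := fun p : α × α => f p.1)
      fun p _ => hf p.1]
    refine sum_congr rfl fun b _ => ?_
    rw [filter_filter, sq, ← card_product]
    congr 1
    ext ⟨a, a'⟩
    simp only [mem_filter, mem_univ, true_and, mem_product]
    constructor
    · rintro ⟨h, rfl⟩
      exact ⟨rfl, h.symm⟩
    · rintro ⟨rfl, h⟩
      exact ⟨h.symm, rfl⟩
  rw [hα, hpairs]
  exact sq_sum_le_card_mul_sum_sq

def wordSum {k : ℕ} (s : Fin k → Fin d × ℤˣ) : Vtx d := ∑ j, unitVec (s j)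

lemma wordSum_mem_box {k : ℕ} (s : Fin k → Fin d × ℤˣ) :
    wordSum s ∈ Fintype.piFinset fun _ : Fin d => Icc (-(k : ℤ)) k := by
  rw [Fintype.mem_piFinset]
  intro i
  have hbound : ∀ e : Fin d × ℤˣ, |unitVec e i| ≤ 1 := by
    rintro ⟨j, u⟩
    by_cases hij : i = j
    · subst hij
      simpa [unitVec] using (Int.isUnit_iff_abs_eq.mp u.isUnit).le
    · simp [unitVec, hij]
  have : |wordSum s i| ≤ k := by
    calc |wordSum s i| ≤ ∑ j, |unitVec (s j) i| := by
          simpa [wordSum] using Finset.abs_sum_le_sum_abs (fun j => unitVec (s j) i) univ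
      _ ≤ ∑ _j : Fin k, (1 : ℤ) := sum_le_sum fun j _ => hbound (s j)
      _ = k := by simp
  exact mem_Icc.mpr (abs_le.mp this)

abbrev BalancedPairs (d k : ℕ) :=
  {st : (Fin k → Fin d × ℤˣ) × (Fin k → Fin d × ℤˣ) // wordSum st.1 = wordSum st.2}

lemma pow_le_mul_card_balancedPairs (d k : ℕ) :
    (2 * d) ^ (2 * k) ≤ (2 * k + 1) ^ d * Fintype.card (BalancedPairs d k) := by
  have hbox : #(Fintype.piFinset fun _ : Fin d => Icc (-(k : ℤ)) k) = (2 * k + 1) ^ d := by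
    rw [Fintype.card_piFinset, prod_const, card_univ, Fintype.card_fin, Int.card_Icc]
    congr 1
    omega
  have := card_sq_le_card_mul_card_fiberPairs wordSum _ (wordSum_mem_box (d := d) (k := k))
  simp only [hbox, Fintype.card_fun, Fintype.card_prod, Fintype.card_fin,
    Fintype.card_units_int, ← pow_mul] at this
  rwa [mul_comm d, mul_comm k] at this

def detourWalk {k : ℕ} (p : List (Vtx d)) (s t : Fin k → Fin d × ℤˣ) : List (Vtx d) :=
  p ++ List.ofFn (fun j => unitVec (s j)) ++ List.ofFn (fun j => -unitVec (t j)) ++ p.map (-·)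

lemma length_detourWalk {k : ℕ} (p : List (Vtx d)) (s t : Fin k → Fin d × ℤˣ) :
    (detourWalk p s t).length = 2 * k + 2 * p.length := by
  simp [detourWalk]
  ring

lemma isUnitStep_of_mem_detourWalk {k : ℕ} {p : List (Vtx d)} (hp : ∀ v ∈ p, IsUnitStep v)
    (s t : Fin k → Fin d × ℤˣ) : ∀ v ∈ detourWalk p s t, IsUnitStep v := by
  simp only [detourWalk, List.mem_append, List.mem_ofFn, List.mem_map]
  rintro v (((hv | ⟨j, rfl⟩) | ⟨j, rfl⟩) | ⟨u, hu, rfl⟩)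
  · exact hp v hv
  · exact isUnitStep_unitVec _
  · exact (isUnitStep_unitVec _).neg
  · exact (hp u hu).neg

lemma sum_detourWalk {k : ℕ} (p : List (Vtx d)) (s t : Fin k → Fin d × ℤˣ) :
    (detourWalk p s t).sum = wordSum s - wordSum t := by
  simp [detourWalk, wordSum, List.sum_ofFn, ← List.sum_neg]
  abel

lemma detourWalk_injective {k : ℕ} (p : List (Vtx d)) {s t s' t' : Fin k → Fin d × ℤˣ}
    (h : detourWalk p s t = detourWalk p s' t') : s = s' ∧ t = t' := by
  obtain ⟨hps, ht⟩ := List.append_inj (List.append_cancel_right h) (by simp)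
  exact ⟨unitVec_injective.comp_left (List.ofFn_injective (List.append_cancel_left hps)),
    (neg_injective.comp unitVec_injective).comp_left (List.ofFn_injective ht)⟩

lemma mem_walkLoop_detourWalk {k : ℕ} {x y : Vtx d} {p : List (Vtx d)} (hp : p.sum = y - x)
    (hp0 : p ≠ []) (s t : Fin k → Fin d × ℤˣ) :
    x ∈ walkLoop x (detourWalk p s t) ∧ y ∈ walkLoop x (detourWalk p s t) := by
  have hlen : p.length < (detourWalk p s t).length := by
    rw [length_detourWalk]
    have := List.length_pos_of_ne_nil hp0
    omega
  constructor
  · simpa using add_sum_take_mem_walkLoop x (i := 0) (by omega)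
  · have htake : (detourWalk p s t).take p.length = p := by
      rw [detourWalk, List.append_assoc, List.append_assoc, List.take_left]
    simpa [htake, hp] using add_sum_take_mem_walkLoop x hlen

lemma card_balancedPairs_mul_le_tsum {x y : Vtx d} {p : List (Vtx d)}
    (hu : ∀ v ∈ p, IsUnitStep v) (hp : p.sum = y - x) (hp0 : p ≠ []) (κ : ℝ) (k : ℕ) :
    (Fintype.card (BalancedPairs d k) : ℝ≥0∞) *
        ENNReal.ofReal (walkWeight d κ (2 * k + 2 * p.length)) ≤
      ∑' l : {l : List (Vtx d) // IsLoop l ∧ x ∈ l ∧ y ∈ l},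
        ENNReal.ofReal (loopWeightK d κ l.1) := by
  have hunit (q : BalancedPairs d k) := isUnitStep_of_mem_detourWalk hu q.1.1 q.1.2
  have hclosed (q : BalancedPairs d k) : (detourWalk p q.1.1 q.1.2).sum = 0 := by
    rw [sum_detourWalk, q.2, sub_self]
  have hlen (q : BalancedPairs d k) : 2 ≤ (detourWalk p q.1.1 q.1.2).length := by
    rw [length_detourWalk]
    have := List.length_pos_of_ne_nil hp0
    omega
  let loop (q : BalancedPairs d k) : {l : List (Vtx d) // IsLoop l ∧ x ∈ l ∧ y ∈ l} :=
    ⟨walkLoop x (detourWalk p q.1.1 q.1.2), isLoop_walkLoop x (hunit q) (hclosed q) (hlen q),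
      mem_walkLoop_detourWalk hp hp0 q.1.1 q.1.2⟩
  have hloop : Function.Injective loop := by
    rintro ⟨⟨s, t⟩, hst⟩ ⟨⟨s', t'⟩, hst'⟩ h
    obtain ⟨rfl, rfl⟩ := detourWalk_injective p
      (eq_of_walkLoop_eq x (hclosed _) (hclosed _) (congrArg Subtype.val h))
    rfl
  calc (Fintype.card (BalancedPairs d k) : ℝ≥0∞) *
          ENNReal.ofReal (walkWeight d κ (2 * k + 2 * p.length))
      = ∑ q, ENNReal.ofReal (loopWeightK d κ (loop q).1) := by
        simp only [loop, loopWeightK_walkLoop κ x (hunit _) (hclosed _), length_detourWalk,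
          Finset.sum_const, Finset.card_univ, nsmul_eq_mul]
    _ ≤ _ := by
        rw [← tsum_fintype (L := .unconditional _)]
        exact ENNReal.tsum_comp_le_tsum_of_injective hloop _

lemma eventually_mul_pow_le_pow (C : ℝ) (D : ℕ) {r : ℝ} (hr : 1 < r) :
    ∀ᶠ n : ℕ in atTop, C * (n : ℝ) ^ D ≤ r ^ n := by
  filter_upwards [((isLittleO_pow_const_const_pow_of_one_lt D hr).const_mul_left C).bound
    one_pos] with n hn
  calc C * (n : ℝ) ^ D ≤ ‖C * (n : ℝ) ^ D‖ := Real.le_norm_self _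
    _ ≤ ‖r ^ n‖ := by simpa using hn
    _ = r ^ n := Real.norm_of_nonneg (pow_nonneg (by linarith) n)

lemma tendsto_card_balancedPairs_mul_walkWeight (hd : 0 < d) {κ : ℝ} (hκ1 : -1 < κ)
    (hκ0 : κ < 0) {a : ℕ} (ha : 1 ≤ a) :
    Tendsto (fun k => (Fintype.card (BalancedPairs d k) : ℝ) * walkWeight d κ (2 * k + 2 * a))
      atTop atTop := by
  have hρ : 1 < (1 + κ)⁻¹ := (one_lt_inv₀ (by linarith)).mpr (by linarith)
  have hn : Tendsto (fun k : ℕ => 2 * k + 2 * a) atTop atTop :=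
    tendsto_atTop_mono (fun k => by simp only [id]; omega) tendsto_id
  refine tendsto_atTop.mpr fun M => ?_
  filter_upwards [hn.eventually
    (eventually_mul_pow_le_pow (max M 0 * (2 * d) ^ (2 * a)) (d + 1) hρ)] with k hk
  have hcard : (2 * (d : ℝ)) ^ (2 * k) ≤ (2 * k + 1) ^ d * Fintype.card (BalancedPairs d k) := by
    exact_mod_cast pow_le_mul_card_balancedPairs d k
  set c : ℝ := (Fintype.card (BalancedPairs d k) : ℝ)
  set n := 2 * k + 2 * a with hn_def
  have hkn : 2 * (k : ℝ) + 1 ≤ n := by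
    rw [hn_def]
    exact_mod_cast (by omega : 2 * k + 1 ≤ 2 * k + 2 * a)
  have hn0 : (0 : ℝ) < n := by exact_mod_cast (by omega : 0 < n)
  have key : max M 0 * (n * (2 * d) ^ n) ≤ c * (1 + κ)⁻¹ ^ n := by
    calc max M 0 * (n * (2 * d) ^ n)
        = max M 0 * n * (2 * d) ^ (2 * a) * (2 * d) ^ (2 * k) := by
          rw [hn_def, pow_add]
          push_cast
          ring
      _ ≤ max M 0 * n * (2 * d) ^ (2 * a) * ((2 * k + 1) ^ d * c) := by gcongr
      _ ≤ max M 0 * n * (2 * d) ^ (2 * a) * (n ^ d * c) := by gcongr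
      _ = c * (max M 0 * (2 * d) ^ (2 * a) * n ^ (d + 1)) := by ring
      _ ≤ c * (1 + κ)⁻¹ ^ n := by gcongr
  calc M ≤ max M 0 := le_max_left M 0
    _ = max M 0 * (n * (2 * d) ^ n) * ((n : ℝ)⁻¹ * (2 * (d : ℝ))⁻¹ ^ n) := by
        rw [inv_pow]
        field_simp
    _ ≤ c * (1 + κ)⁻¹ ^ n * ((n : ℝ)⁻¹ * (2 * (d : ℝ))⁻¹ ^ n) := by gcongr
    _ = c * walkWeight d κ n := by rw [walkWeight]; ring

theorem tsum_loopWeightK_eq_top {κ : ℝ} (hκ1 : -1 < κ) (hκ0 : κ < 0) {x y : Vtx d}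
    (hxy : x ≠ y) :
    ∑' l : {l : List (Vtx d) // IsLoop l ∧ x ∈ l ∧ y ∈ l},
      ENNReal.ofReal (loopWeightK d κ l.1) = ⊤ := by
  obtain ⟨p, hu, hp⟩ := exists_unitStep_path (y - x)
  have hp0 : p ≠ [] := by
    rintro rfl
    exact hxy (sub_eq_zero.mp hp.symm).symm
  have hd : 0 < d := Nat.pos_of_ne_zero fun h => by
    subst h
    exact hxy (Subsingleton.elim x y)
  refine ENNReal.eq_top_of_forall_nnreal_le fun r => ?_
  obtain ⟨k, hk⟩ := ((tendsto_card_balancedPairs_mul_walkWeight hd hκ1 hκ0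
    (List.length_pos_of_ne_nil hp0)).eventually_ge_atTop (r : ℝ)).exists
  set n := 2 * k + 2 * p.length
  calc (r : ℝ≥0∞) = ENNReal.ofReal r := (ENNReal.ofReal_coe_nnreal).symm
    _ ≤ ENNReal.ofReal (Fintype.card (BalancedPairs d k) * walkWeight d κ n) :=
        ENNReal.ofReal_le_ofReal hk
    _ = Fintype.card (BalancedPairs d k) * ENNReal.ofReal (walkWeight d κ n) := by
        rw [ENNReal.ofReal_mul (Nat.cast_nonneg _), ENNReal.ofReal_natCast]
    _ ≤ _ := card_balancedPairs_mul_le_tsum hu hp hp0 κ k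

theorem measure_forall_eq_zero_of_tsum_eq_top {ι Ω : Type*} [MeasurableSpace Ω]
    {P : Measure Ω} {N : Ω → ι → ℕ} (hind : iIndepFun (fun i ω => N ω i) P) {m : ι → ℝ}
    (hm : ∀ i, 0 ≤ m i) (hzero : ∀ i, P {ω | N ω i = 0} = ENNReal.ofReal (Real.exp (-m i)))
    (htop : ∑' i, ENNReal.ofReal (m i) = ⊤) :
    P {ω | ∀ i, N ω i = 0} = 0 := by
  have hfinite (F : Finset ι) :
      P {ω | ∀ i, N ω i = 0} ≤ ENNReal.ofReal (Real.exp (-∑ i ∈ F, m i)) :=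
    calc P {ω | ∀ i, N ω i = 0} ≤ P (⋂ i ∈ F, (fun ω => N ω i) ⁻¹' {0}) :=
          measure_mono fun ω hω => by simp_all
      _ = ∏ i ∈ F, P ((fun ω => N ω i) ⁻¹' {0}) :=
          hind.measure_inter_preimage_eq_mul F fun _ _ => measurableSet_singleton 0
      _ = ENNReal.ofReal (Real.exp (-∑ i ∈ F, m i)) := by
          simp only [Set.preimage, Set.mem_singleton_iff, hzero]
          rw [← ENNReal.ofReal_prod_of_nonneg fun i _ => (Real.exp_pos _).le, ← Real.exp_sum,
            Finset.sum_neg_distrib]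
  have hunbounded (M : ℝ) : ∃ F : Finset ι, M ≤ ∑ i ∈ F, m i := by
    have : ENNReal.ofReal M < ⨆ F : Finset ι, ∑ i ∈ F, ENNReal.ofReal (m i) := by
      rw [← ENNReal.tsum_eq_iSup_sum, htop]
      exact ENNReal.ofReal_lt_top
    obtain ⟨F, hF⟩ := lt_iSup_iff.mp this
    rw [← ENNReal.ofReal_sum_of_nonneg fun i _ => hm i] at hF
    exact ⟨F, ((ENNReal.ofReal_lt_ofReal_iff').mp hF).1.le⟩
  have hlim : Tendsto (fun M => ENNReal.ofReal (Real.exp (-M))) atTop (𝓝 0) := by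
    simpa using ENNReal.tendsto_ofReal Real.tendsto_exp_neg_atTop_nhds_zero
  refine nonpos_iff_eq_zero.mp (ge_of_tendsto' hlim fun M => ?_)
  obtain ⟨F, hF⟩ := hunbounded M
  exact (hfinite F).trans (ENNReal.ofReal_le_ofReal (Real.exp_le_exp.mpr (neg_le_neg hF)))

theorem ae_exists_loop_mem_mem {α κ : ℝ} (hα : 0 < α) (hκ1 : -1 < κ) (hκ0 : κ < 0)
    {x y : Vtx d} (hxy : x ≠ y) {Ω : Type*} [MeasurableSpace Ω] {P : Measure Ω}
    {L : Ω → List (Vtx d) → ℕ} (hL : IsPoissonLoopSoupK d κ P α L) :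
    ∀ᵐ ω ∂P, ∃ l, 0 < L ω l ∧ x ∈ l ∧ y ∈ l := by
  have hnone : P {ω | ∀ l : {l // IsLoop l ∧ x ∈ l ∧ y ∈ l}, L ω l.1 = 0} = 0 := by
    refine measure_forall_eq_zero_of_tsum_eq_top (hL.2.1.precomp Subtype.val_injective)
      (m := fun l => α * loopWeightK d κ l.1)
      (fun l => mul_nonneg hα.le (loopWeightK_nonneg hκ1 l.1)) (fun l => ?_) ?_
    · simpa using hL.2.2.1 l.1 l.2.1 0
    · simp only [ENNReal.ofReal_mul hα.le, ENNReal.tsum_mul_left]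
      rw [tsum_loopWeightK_eq_top hκ1 hκ0 hxy, ENNReal.mul_top (ENNReal.ofReal_pos.mpr hα).ne']
  rw [ae_iff]
  refine measure_mono_null (fun ω hω => ?_) hnone
  intro l
  by_contra hl
  exact hω ⟨l.1, Nat.pos_of_ne_zero hl, l.2.2⟩

end LoopSoup

theorem negative_kappa_loops_cover_general (d : ℕ) (α κ : ℝ) (hα : 0 < α)
    (hκ1 : -1 < κ) (hκ0 : κ < 0)
    (x y : Vtx d) (hxy : x ≠ y)
    {Ω : Type*} [MeasurableSpace Ω] (P : Measure Ω) [IsProbabilityMeasure P]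
    (L : Ω → List (Vtx d) → ℕ) (hL : IsPoissonLoopSoupK d κ P α L) :
    (∑' l : {l : List (Vtx d) // IsLoop l ∧ x ∈ l ∧ y ∈ l},
        ENNReal.ofReal (loopWeightK d κ l.1)) = ⊤ ∧
    P {ω | ∃ l : List (Vtx d), 0 < L ω l ∧ x ∈ l ∧ y ∈ l} = 1 ∧
    P {ω | ∀ z : Vtx d, ∃ l : List (Vtx d), 0 < L ω l ∧ x ∈ l ∧ z ∈ l} = 1 := by
  have measure_eq_one {p : Ω → Prop} (h : ∀ᵐ ω ∂P, p ω) : P {ω | p ω} = 1 :=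
    (measure_congr (ae_eq_univ.mpr h)).trans measure_univ
  have hxz (z : Vtx d) : ∀ᵐ ω ∂P, ∃ l, 0 < L ω l ∧ x ∈ l ∧ z ∈ l := by
    by_cases hz : x = z
    · filter_upwards [LoopSoup.ae_exists_loop_mem_mem hα hκ1 hκ0 hxy hL] with ω hω
      obtain ⟨l, hl, hx, -⟩ := hω
      exact ⟨l, hl, hx, hz ▸ hx⟩
    · exact LoopSoup.ae_exists_loop_mem_mem hα hκ1 hκ0 hz hL
  exact ⟨LoopSoup.tsum_loopWeightK_eq_top hκ1 hκ0 hxy, measure_eq_one (hxz y),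
    measure_eq_one (ae_all_iff.mpr hxz)⟩

/-- For loop percolation on `ℤ^d`, `d ≥ 3`, with `α > 0` and
`−1 < κ < 0`: for any two distinct vertices `x ≠ y`, `μ_κ(ℓ : x,y ∈ ℓ) = ∞`; hence almost
surely some loop of `L_{α,κ}` visits both `x` and `y`, and in particular almost surely all of
`ℤ^d` is covered by the loops passing through any fixed vertex `x`. -/
theorem negative_kappa_loops_cover (d : ℕ) (hd : 3 ≤ d) (α κ : ℝ) (hα : 0 < α)
    (hκ1 : -1 < κ) (hκ0 : κ < 0)
    (x y : Vtx d) (hxy : x ≠ y)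
    {Ω : Type*} [MeasurableSpace Ω] (P : Measure Ω) [IsProbabilityMeasure P]
    (L : Ω → List (Vtx d) → ℕ) (hL : IsPoissonLoopSoupK d κ P α L) :
    (∑' l : {l : List (Vtx d) // IsLoop l ∧ x ∈ l ∧ y ∈ l},
        ENNReal.ofReal (loopWeightK d κ l.1)) = ⊤ ∧
    P {ω | ∃ l : List (Vtx d), 0 < L ω l ∧ x ∈ l ∧ y ∈ l} = 1 ∧
    P {ω | ∀ z : Vtx d, ∃ l : List (Vtx d), 0 < L ω l ∧ x ∈ l ∧ z ∈ l} = 1 :=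
  negative_kappa_loops_cover_general d α κ hα hκ1 hκ0 x y hxy P L hL

end
end

section
/- For the Poisson loop ensemble L_α associated with simple random walk on ℤ^d (κ = 0), for every α > 0 and every tail event A (i.e. A measurable with respect to loops avoiding K, for every finite K ⊆ ℤ^d), P[A] ∈ {0,1}. -/
/-!
The multiplicities of the based loops are independent, so Kolmogorov's zero-one law applies to
their tail σ-algebra `limsup (σ(L l)) cofinite`. A tail event of the loop soup lies in it: given
finitely many loops `F`, take `K` to be the set of vertices they visit; every loop avoiding `K`
lies outside `F`, except the empty list, whose multiplicity is identically `0`.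
-/

open MeasureTheory

noncomputable section

/-- `L` is a Poisson loop ensemble with intensity `α μ̇` (κ = 0): the multiplicities of the
based loops are independent, Poisson distributed with parameter `α` times the loop weight,
and vanish off the set of nontrivial loops.  (On the countable space of loops this
characterizes the Poisson random measure with intensity `α μ̇`; its pushforward to unrooted
loops is the Poisson ensemble `L_α` with intensity `α μ`.) -/
def IsPoissonLoopSoup (d : ℕ) {Ω : Type*} [MeasurableSpace Ω] (P : Measure Ω)
    (α : ℝ) (L : Ω → List (Vtx d) → ℕ) : Prop :=
  (∀ l, Measurable fun ω => L ω l) ∧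
  ProbabilityTheory.iIndepFun (fun l ω => L ω l) P ∧
  (∀ l, IsLoop l → ∀ n : ℕ,
    P {ω | L ω l = n} = ENNReal.ofReal
      (Real.exp (-(α * loopWeight d l)) * (α * loopWeight d l) ^ n / (Nat.factorial n : ℝ))) ∧
  (∀ l, ¬ IsLoop l → ∀ ω, L ω l = 0)

end

open ProbabilityTheory Filter

namespace ProbabilityTheory

variable {ι Ω : Type*} {m0 : MeasurableSpace Ω} {s : ι → MeasurableSpace Ω}

theorem measurableSet_limsup_cofinite_iff {t : Set Ω} :
    MeasurableSet[limsup s cofinite] t ↔ ∀ F : Finset ι, MeasurableSet[⨆ i ∉ F, s i] t := by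
  rw [limsup_eq_iInf_iSup, MeasurableSpace.measurableSet_iInf]
  refine ⟨fun h F => ?_, fun h S => ?_⟩
  · have := MeasurableSpace.measurableSet_iInf.1 (h (F : Set ι)ᶜ) (by simp)
    simpa only [Set.mem_compl_iff, Finset.mem_coe] using this
  · refine MeasurableSpace.measurableSet_iInf.2 fun hS => ?_
    have hfin : Sᶜ.Finite := hS
    have hcompl : (⨆ i ∉ hfin.toFinset, s i) = ⨆ i ∈ S, s i :=
      iSup_congr fun i => iSup_congr_Prop (by simp) fun _ => rfl
    exact hcompl ▸ h hfin.toFinset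

theorem measure_zero_or_one_of_measurableSet_limsup_cofinite {μ : Measure Ω}
    [IsProbabilityMeasure μ] (h_le : ∀ i, s i ≤ m0) (h_indep : iIndep s μ) {t : Set Ω}
    (ht_tail : MeasurableSet[limsup s cofinite] t) : μ t = 0 ∨ μ t = 1 :=
  measure_zero_or_one_of_measurableSet_limsup (p := Set.Finite) (ns := fun F : Finset ι => ↑F)
    h_le h_indep (fun _ ht => by rwa [mem_cofinite, compl_compl])
    (fun F G => by classical exact ⟨F ∪ G, Finset.subset_union_left, Finset.subset_union_right⟩)
    (fun F => F.finite_toSet) (fun i => ⟨{i}, Finset.mem_singleton_self i⟩) ht_tail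

end ProbabilityTheory

theorem MeasurableSpace.comap_pi_eq_iSup {ι Ω : Type*} {β : ι → Type*}
    [m : ∀ i, MeasurableSpace (β i)] (f : Ω → ∀ i, β i) :
    MeasurableSpace.comap f MeasurableSpace.pi = ⨆ i, (m i).comap fun ω => f ω i := by
  simp only [MeasurableSpace.pi, MeasurableSpace.comap_iSup, MeasurableSpace.comap_comp]
  rfl

theorem iSup_comap_avoiding_le_iSup_comap_notMem {V Ω : Type*} [DecidableEq V]
    (L : Ω → List V → ℕ) (hnil : ∀ ω, L ω [] = 0) (F : Finset (List V)) :
    ⨆ l : {l : List V // ∀ v ∈ l, v ∉ F.biUnion List.toFinset},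
        MeasurableSpace.comap (fun ω => L ω l.1) inferInstance ≤
      ⨆ l ∉ F, MeasurableSpace.comap (fun ω => L ω l) inferInstance := by
  refine iSup_le fun ⟨l, hl⟩ => ?_
  rcases l with _ | ⟨v, l⟩
  · simp only [hnil, MeasurableSpace.comap_const, bot_le]
  · have hlF : v :: l ∉ F := fun hF =>
      hl v List.mem_cons_self (Finset.mem_biUnion.2 ⟨_, hF, List.mem_toFinset.2 List.mem_cons_self⟩)
    exact le_iSup₂_of_le (v :: l) hlF le_rfl

theorem loop_soup_zero_one_law_general (d : ℕ) (α : ℝ)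
    {Ω : Type*} [MeasurableSpace Ω] (P : Measure Ω) [IsProbabilityMeasure P]
    (L : Ω → List (Vtx d) → ℕ) (hL : IsPoissonLoopSoup d P α L)
    (A : Set Ω)
    (hA : ∀ K : Finset (Vtx d),
      MeasurableSet[MeasurableSpace.comap
        (fun ω => fun l : {l : List (Vtx d) // ∀ v ∈ l, v ∉ K} => L ω l.1)
        (inferInstance : MeasurableSpace ({l : List (Vtx d) // ∀ v ∈ l, v ∉ K} → ℕ))] A) :
    P A = 0 ∨ P A = 1 := by
  obtain ⟨hmeas, hindep, -, hzero⟩ := hL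
  have hnil : ∀ ω, L ω [] = 0 := hzero [] fun h => by simp [IsLoop] at h
  refine measure_zero_or_one_of_measurableSet_limsup_cofinite (fun l => (hmeas l).comap_le)
    hindep.iIndep (measurableSet_limsup_cofinite_iff.2 fun F => ?_)
  have hAK := hA (F.biUnion List.toFinset)
  rw [MeasurableSpace.comap_pi_eq_iSup] at hAK
  exact iSup_comap_avoiding_le_iSup_comap_notMem L hnil F _ hAK

/-- For the Poisson loop ensemble `L_α` on `ℤ^d` (κ = 0), every tail event
— an event measurable, for every finite `K ⊆ ℤ^d`, with respect to the configuration of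
loops avoiding `K` — has probability `0` or `1`. -/
theorem loop_soup_zero_one_law (d : ℕ) (hd : 3 ≤ d) (α : ℝ) (hα : 0 < α)
    {Ω : Type*} [MeasurableSpace Ω] (P : Measure Ω) [IsProbabilityMeasure P]
    (L : Ω → List (Vtx d) → ℕ) (hL : IsPoissonLoopSoup d P α L)
    (A : Set Ω)
    (hA : ∀ K : Finset (Vtx d),
      MeasurableSet[MeasurableSpace.comap
        (fun ω => fun l : {l : List (Vtx d) // ∀ v ∈ l, v ∉ K} => L ω l.1)
        (inferInstance : MeasurableSpace ({l : List (Vtx d) // ∀ v ∈ l, v ∉ K} → ℕ))] A) :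
    P A = 0 ∨ P A = 1 :=
  loop_soup_zero_one_law_general d α P L hL A hA
end

section
/- The Poisson loop ensemble on ℤ^d associated with simple random walk is invariant under lattice translations and ergodic with respect to the group of lattice shifts. -/
open MeasureTheory

noncomputable section

/-- The lattice shift `t_x` acting on loop configurations: the shifted configuration gives a
loop `l` the multiplicity that the original configuration gives `l − x`. -/
def shiftConfig (d : ℕ) (x : Vtx d) (c : List (Vtx d) → ℕ) : List (Vtx d) → ℕ :=
  fun l => c (l.map fun v => v - x)

/-!
Translation maps loops to loops and preserves `Qd`, hence loop weights, so a shifted soup is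
again a Poisson loop soup with the same intensity; since the law of a soup is the product of
its Poisson marginals, the law is shift invariant. For ergodicity, a cylinder event depends on
finitely many loops, and a shift avoiding the differences of their first entries moves these
loops off themselves, so by independence the event is independent of its translate.
Approximating an invariant event `A` by cylinders then forces `ν A = (ν A)²` for the law `ν`.
-/

open ProbabilityTheory
open scoped symmDiff

theorem Set.inter_symmDiff_inter_subset {β : Type*} (s t s' t' : Set β) :
    (s ∩ t) ∆ (s' ∩ t') ⊆ s ∆ s' ∪ t ∆ t' := by
  intro a
  simp only [Set.mem_symmDiff, Set.mem_union, Set.mem_inter_iff]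
  tauto

theorem MeasureTheory.MeasurePreserving.abs_measureReal_inter_preimage_sub_le {β : Type*}
    [MeasurableSpace β] {ν : Measure β} [IsFiniteMeasure ν] {T : β → β}
    (hT : MeasurePreserving T ν ν)
    {A B : Set β} (hA : MeasurableSet A) (hB : MeasurableSet B) :
    |ν.real (A ∩ T ⁻¹' A) - ν.real (B ∩ T ⁻¹' B)| ≤ 2 * ν.real (A ∆ B) :=
  calc |ν.real (A ∩ T ⁻¹' A) - ν.real (B ∩ T ⁻¹' B)|
      ≤ ν.real ((A ∩ T ⁻¹' A) ∆ (B ∩ T ⁻¹' B)) :=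
        abs_measureReal_sub_le_measureReal_symmDiff
          (hA.inter (hT.measurable hA)).nullMeasurableSet
          (hB.inter (hT.measurable hB)).nullMeasurableSet
    _ ≤ ν.real (A ∆ B ∪ T ⁻¹' (A ∆ B)) := by
        rw [Set.preimage_symmDiff]
        exact measureReal_mono (Set.inter_symmDiff_inter_subset _ _ _ _)
    _ ≤ ν.real (A ∆ B) + ν.real (T ⁻¹' (A ∆ B)) := measureReal_union_le _ _
    _ = 2 * ν.real (A ∆ B) := by
        rw [hT.measureReal_preimage (hA.symmDiff hB).nullMeasurableSet, two_mul]

/-- Approximating `A` by `B ∈ 𝒞` with `ν (A ∆ B) ≤ ε` turns `ν A = ν (A ∩ T⁻¹ A)` and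
`ν (B ∩ T⁻¹ B) = (ν B)²` into `|(ν A)² - ν A| ≤ 4 ε`. -/
theorem measure_eq_zero_or_one_of_mixing {β ι : Type*} [MeasurableSpace β] {ν : Measure β}
    [IsProbabilityMeasure ν] {𝒞 : Set (Set β)} (h𝒞 : ν.MeasureDense 𝒞) {T : ι → β → β}
    (hT : ∀ i, MeasurePreserving (T i) ν ν)
    (hmix : ∀ B ∈ 𝒞, ∃ i, ν (B ∩ T i ⁻¹' B) = ν B * ν (T i ⁻¹' B))
    {A : Set β} (hA : MeasurableSet A) (hAinv : ∀ i, T i ⁻¹' A = A) :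
    ν A = 0 ∨ ν A = 1 := by
  have key : ∀ ε > 0, |ν.real A * ν.real A - ν.real A| ≤ 4 * ε := by
    intro ε hε
    obtain ⟨B, hB, hAB⟩ := h𝒞.approx A hA (measure_ne_top ν A) ε hε
    obtain ⟨i, hi⟩ := hmix B hB
    have hBm := h𝒞.measurable B hB
    have hAB : ν.real (A ∆ B) ≤ ε := ENNReal.toReal_le_of_le_ofReal hε.le hAB.le
    have hdiff : |ν.real A - ν.real B| ≤ ε :=
      (abs_measureReal_sub_le_measureReal_symmDiff hA.nullMeasurableSet
        hBm.nullMeasurableSet).trans hAB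
    have hdiff_sq : |ν.real A - ν.real B * ν.real B| ≤ 2 * ε := by
      have hBsq : ν.real (B ∩ T i ⁻¹' B) = ν.real B * ν.real B := by
        rw [measureReal_def, hi, (hT i).measure_preimage hBm.nullMeasurableSet, ENNReal.toReal_mul,
          measureReal_def]
      have h := (hT i).abs_measureReal_inter_preimage_sub_le hA hBm
      rw [hAinv, Set.inter_self, hBsq] at h
      linarith
    have hsum : |ν.real A + ν.real B| ≤ 2 := by
      rw [abs_of_nonneg (by positivity)]
      linarith [measureReal_le_one (μ := ν) (s := A), measureReal_le_one (μ := ν) (s := B)]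
    calc |ν.real A * ν.real A - ν.real A|
        = |(ν.real A - ν.real B) * (ν.real A + ν.real B) - (ν.real A - ν.real B * ν.real B)| := by
          congr 1; ring
      _ ≤ |ν.real A - ν.real B| * |ν.real A + ν.real B| + |ν.real A - ν.real B * ν.real B| := by
          rw [← abs_mul]
          exact abs_sub _ _
      _ ≤ ε * 2 + 2 * ε := add_le_add (mul_le_mul hdiff hsum (abs_nonneg _) hε.le) hdiff_sq
      _ = 4 * ε := by ring
  have hidem : IsIdempotentElem (ν.real A) := eq_of_forall_dist_le fun ε hε => by
    rw [Real.dist_eq]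
    exact (key (ε / 4) (by positivity)).trans_eq (by ring)
  rcases IsIdempotentElem.iff_eq_zero_or_one.1 hidem with h | h
  · exact Or.inl ((measureReal_eq_zero_iff (measure_ne_top ν A)).1 h)
  · exact Or.inr (by rwa [measureReal_def, ENNReal.toReal_eq_one_iff] at h)

section Translation

variable {d : ℕ}

theorem Qd_sub_sub (x a b : Vtx d) : Qd d (a - x) (b - x) = Qd d a b := by
  simp only [Qd, Pi.sub_apply, sub_sub_sub_cancel_right]

theorem List.getD_map_of_lt {β γ : Type*} (f : β → γ) {l : List β} {i : ℕ} (hi : i < l.length)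
    (b : β) (c : γ) : (l.map f).getD i c = f (l.getD i b) := by
  rw [List.getD_eq_getElem _ _ (by simpa using hi), List.getD_eq_getElem _ _ hi,
    List.getElem_map]

theorem isLoop_map_iff {f : Vtx d → Vtx d} (hf : Function.Injective f) (l : List (Vtx d)) :
    IsLoop (l.map f) ↔ IsLoop l := by
  simp only [IsLoop, List.length_map]
  refine and_congr_right fun hlen => forall₂_congr fun i hi => ?_
  have hi' : (i + 1) % l.length < l.length := Nat.mod_lt _ (by omega)
  rw [List.getD_map_of_lt f hi 0, List.getD_map_of_lt f hi' 0, hf.ne_iff]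

theorem loopWeight_map_sub (x : Vtx d) (l : List (Vtx d)) :
    loopWeight d (l.map (· - x)) = loopWeight d l := by
  simp only [loopWeight, List.length_map]
  congr 1
  refine Finset.prod_congr rfl fun i hi => ?_
  have hi : i < l.length := Finset.mem_range.1 hi
  have hi' : (i + 1) % l.length < l.length := Nat.mod_lt _ (by omega)
  rw [List.getD_map_of_lt _ hi 0, List.getD_map_of_lt _ hi' 0, Qd_sub_sub]

theorem not_isLoop_of_isEmpty [IsEmpty (Fin d)] (l : List (Vtx d)) : ¬ IsLoop l :=
  fun hl => hl.2 0 (lt_of_lt_of_le two_pos hl.1) (Subsingleton.elim _ _)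

/-- The shift avoids every difference of first entries of lists in `s`. -/
theorem exists_forall_isLoop_map_sub_notMem (s : Finset (List (Vtx d))) :
    ∃ x : Vtx d, ∀ l ∈ s, IsLoop l → l.map (· - x) ∉ s := by
  rcases isEmpty_or_nonempty (Fin d) with hd | hd
  · exact ⟨0, fun l _ hl => absurd hl (not_isLoop_of_isEmpty l)⟩
  obtain ⟨x, hx⟩ := Infinite.exists_notMem_finset
    ((s ×ˢ s).image fun p : List (Vtx d) × List (Vtx d) => p.1.headD 0 - p.2.headD 0)
  refine ⟨x, fun l hl hloop hmem => hx (Finset.mem_image.2 ⟨(l, l.map (· - x)),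
    Finset.mem_product.2 ⟨hl, hmem⟩, ?_⟩)⟩
  obtain ⟨a, t, rfl⟩ := List.exists_cons_of_length_pos (lt_of_lt_of_le two_pos hloop.1)
  simp

end Translation

theorem measurable_shiftConfig {d : ℕ} (x : Vtx d) : Measurable (shiftConfig d x) :=
  measurable_pi_lambda _ fun _ => measurable_pi_apply _

namespace IsPoissonLoopSoup

variable {d : ℕ} {Ω : Type*} [MeasurableSpace Ω] {P : Measure Ω} {α : ℝ}
  {L : Ω → List (Vtx d) → ℕ}

theorem measurable (hL : IsPoissonLoopSoup d P α L) : Measurable L :=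
  measurable_pi_lambda _ hL.1

theorem isProbabilityMeasure (hL : IsPoissonLoopSoup d P α L) : IsProbabilityMeasure P :=
  hL.2.1.isProbabilityMeasure

theorem map_eval_eq {Ω' : Type*} [MeasurableSpace Ω'] {P' : Measure Ω'}
    {L' : Ω' → List (Vtx d) → ℕ} (hL : IsPoissonLoopSoup d P α L)
    (hL' : IsPoissonLoopSoup d P' α L') (l : List (Vtx d)) :
    P.map (fun ω => L ω l) = P'.map (fun ω => L' ω l) := by
  by_cases hl : IsLoop l
  · refine Measure.ext_of_singleton fun n => ?_
    rw [Measure.map_apply (hL.1 l) (measurableSet_singleton n),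
      Measure.map_apply (hL'.1 l) (measurableSet_singleton n)]
    exact (hL.2.2.1 l hl n).trans (hL'.2.2.1 l hl n).symm
  · have := hL.isProbabilityMeasure
    have := hL'.isProbabilityMeasure
    have hzero : (fun ω => L ω l) = fun _ => 0 := funext (hL.2.2.2 l hl)
    have hzero' : (fun ω => L' ω l) = fun _ => 0 := funext (hL'.2.2.2 l hl)
    simp only [hzero, hzero', Measure.map_const, measure_univ, one_smul]

theorem map_eq {Ω' : Type*} [MeasurableSpace Ω'] {P' : Measure Ω'}
    {L' : Ω' → List (Vtx d) → ℕ} (hL : IsPoissonLoopSoup d P α L)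
    (hL' : IsPoissonLoopSoup d P' α L') : P.map L = P'.map L' := by
  have := hL.isProbabilityMeasure
  have := hL'.isProbabilityMeasure
  calc P.map L = Measure.infinitePi fun l => P.map (fun ω => L ω l) :=
        hL.2.1.map_fun_eq_infinitePi_map hL.1
    _ = Measure.infinitePi fun l => P'.map (fun ω => L' ω l) := by
        simp only [hL.map_eval_eq hL']
    _ = P'.map L' := (hL'.2.1.map_fun_eq_infinitePi_map hL'.1).symm

theorem shiftConfig_comp (hL : IsPoissonLoopSoup d P α L) (x : Vtx d) :
    IsPoissonLoopSoup d P α fun ω => shiftConfig d x (L ω) := by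
  have hshift : Function.Injective fun v : Vtx d => v - x := sub_left_injective
  refine ⟨fun l => hL.1 _, hL.2.1.precomp (List.map_injective_iff.2 hshift),
    fun l hl n => ?_, fun l hl => hL.2.2.2 _ ((isLoop_map_iff hshift l).not.2 hl)⟩
  rw [← loopWeight_map_sub x l]
  exact hL.2.2.1 _ ((isLoop_map_iff hshift l).2 hl) n

theorem map_map_shiftConfig (hL : IsPoissonLoopSoup d P α L) (x : Vtx d) :
    (P.map L).map (shiftConfig d x) = P.map L := by
  rw [Measure.map_map (measurable_shiftConfig x) hL.measurable]
  exact (hL.shiftConfig_comp x).map_eq hL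

/-- Only loop coordinates enter: the others, such as that of `[]`, which every shift fixes,
are constant. -/
theorem measurable_comp_iSup_isLoop (hL : IsPoissonLoopSoup d P α L) {κ : Type*}
    (φ : κ → List (Vtx d)) :
    Measurable[⨆ l ∈ {l | l ∈ Set.range φ ∧ IsLoop l},
      MeasurableSpace.comap (fun ω => L ω l) inferInstance] fun ω k => L ω (φ k) := by
  refine @measurable_pi_lambda _ _ _ (_) _ _ fun k => ?_
  by_cases hk : IsLoop (φ k)
  · exact Measurable.of_comap_le
      (le_iSup₂ (f := fun l (_ : l ∈ {l | l ∈ Set.range φ ∧ IsLoop l}) =>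
        MeasurableSpace.comap (fun ω => L ω l) inferInstance) (φ k) ⟨⟨k, rfl⟩, hk⟩)
  · simp only [hL.2.2.2 _ hk, measurable_const]

theorem measure_inter_preimage_eq_mul (hL : IsPoissonLoopSoup d P α L) {κ κ' : Type*}
    (φ : κ → List (Vtx d)) (ψ : κ' → List (Vtx d))
    (hφψ : Disjoint {l | l ∈ Set.range φ ∧ IsLoop l} {l | l ∈ Set.range ψ ∧ IsLoop l})
    {S : Set (κ → ℕ)} {S' : Set (κ' → ℕ)} (hS : MeasurableSet S) (hS' : MeasurableSet S') :
    P ((fun ω k => L ω (φ k)) ⁻¹' S ∩ (fun ω k => L ω (ψ k)) ⁻¹' S')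
      = P ((fun ω k => L ω (φ k)) ⁻¹' S) * P ((fun ω k => L ω (ψ k)) ⁻¹' S') :=
  (Indep_iff _ _ _).1
    (indep_iSup_of_disjoint (fun l => (hL.1 l).comap_le)
      ((iIndepFun_iff_iIndep _ _ _).1 hL.2.1) hφψ)
    _ _ (hL.measurable_comp_iSup_isLoop φ hS) (hL.measurable_comp_iSup_isLoop ψ hS')

theorem exists_map_inter_preimage_shiftConfig_eq_mul (hL : IsPoissonLoopSoup d P α L)
    {B : Set (List (Vtx d) → ℕ)} (hB : B ∈ measurableCylinders fun _ => ℕ) :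
    ∃ x, P.map L (B ∩ shiftConfig d x ⁻¹' B)
      = P.map L B * P.map L (shiftConfig d x ⁻¹' B) := by
  obtain ⟨s, S, hS, rfl⟩ := (mem_measurableCylinders _).1 hB
  obtain ⟨x, hx⟩ := exists_forall_isLoop_map_sub_notMem s
  have hB := MeasurableSet.cylinder (α := fun _ => ℕ) s hS
  have hxB := measurable_shiftConfig x hB
  refine ⟨x, ?_⟩
  rw [Measure.map_apply hL.measurable (hB.inter hxB), Measure.map_apply hL.measurable hB,
    Measure.map_apply hL.measurable hxB, Set.preimage_inter]
  refine hL.measure_inter_preimage_eq_mul (fun l : s => l.1) (fun l : s => l.1.map (· - x))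
    (Set.disjoint_left.2 ?_) hS hS
  rintro _ ⟨⟨l, hl⟩, -⟩ ⟨⟨m, rfl⟩, hloop⟩
  exact hx m m.2 ((isLoop_map_iff sub_left_injective _).1 hloop) (by simp [← hl])

end IsPoissonLoopSoup

theorem loop_soup_translation_invariant_ergodic_general (d : ℕ) (α : ℝ)
    {Ω : Type*} [MeasurableSpace Ω] (P : Measure Ω)
    (L : Ω → List (Vtx d) → ℕ) (hL : IsPoissonLoopSoup d P α L) :
    (∀ x : Vtx d, (P.map L).map (shiftConfig d x) = P.map L) ∧
    (∀ A : Set (List (Vtx d) → ℕ), MeasurableSet A →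
      (∀ x : Vtx d, shiftConfig d x ⁻¹' A = A) →
      (P.map L) A = 0 ∨ (P.map L) A = 1) := by
  have := hL.isProbabilityMeasure
  have := Measure.isProbabilityMeasure_map (μ := P) hL.measurable.aemeasurable
  refine ⟨hL.map_map_shiftConfig, fun A hA hAinv => ?_⟩
  exact measure_eq_zero_or_one_of_mixing
    (.of_generateFrom_isSetAlgebra_finite _ isSetAlgebra_measurableCylinders
      generateFrom_measurableCylinders.symm)
    (fun x => ⟨measurable_shiftConfig x, hL.map_map_shiftConfig x⟩)
    (fun _ => hL.exists_map_inter_preimage_shiftConfig_eq_mul) hA hAinv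

/-- The Poisson loop ensemble on `ℤ^d` (viewed as the law `ν` of the loop
configuration on the configuration space) is invariant under all lattice shifts, and ergodic:
every measurable shift-invariant event has probability `0` or `1`. -/
theorem loop_soup_translation_invariant_ergodic (d : ℕ) (α : ℝ) (hα : 0 < α)
    {Ω : Type*} [MeasurableSpace Ω] (P : Measure Ω) [IsProbabilityMeasure P]
    (L : Ω → List (Vtx d) → ℕ) (hL : IsPoissonLoopSoup d P α L)
    (hLmeas : Measurable L) :
    (∀ x : Vtx d, (P.map L).map (shiftConfig d x) = P.map L) ∧
    (∀ A : Set (List (Vtx d) → ℕ), MeasurableSet A →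
      (∀ x : Vtx d, shiftConfig d x ⁻¹' A = A) →
      (P.map L) A = 0 ∨ (P.map L) A = 1) :=
  loop_soup_translation_invariant_ergodic_general d α P L hL

end
end
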